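/- Let 𝒰 be a unitary system and ψ₁, ψ₂ complete wandering vectors for 𝒰. Then for every complex scalar λ with |λ| ≠ 1, the vector ψ₁ + λψ₂ is a complete Riesz vector for 𝒰. -/
import Mathlib


variable {H : Type*} [NormedAddCommGroup H] [InnerProductSpace ℂ H] [CompleteSpace H]

/-- A family `v` is a Riesz basis for `H` if some bounded invertible operator carries
`v` to an orthonormal basis of `H`. -/
def IsRieszBasis {ι : Type*} (v : ι → H) : Prop :=
  ∃ T : H ≃L[ℂ] H, Orthonormal ℂ (fun i => T (v i)) ∧
    (Submodule.span ℂ (Set.range fun i => T (v i))).topologicalClosure = ⊤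

/-- `ψ` is a complete wandering vector for `𝒰`. -/
def IsCompleteWandering (𝒰 : Set (H →L[ℂ] H)) (ψ : H) : Prop :=
  Orthonormal ℂ (fun U : 𝒰 => (U : H →L[ℂ] H) ψ) ∧
    (Submodule.span ℂ ((fun U : H →L[ℂ] H => U ψ) '' 𝒰)).topologicalClosure = ⊤

/-- If `ψ₁, ψ₂` are complete wandering vectors for a unitary system `𝒰` and `|λ| ≠ 1`, then
`ψ₁ + λψ₂` is a complete Riesz vector for `𝒰`. -/
theorem stmt_6 (𝒰 : Set (H →L[ℂ] H)) (h1 : (1 : H →L[ℂ] H) ∈ 𝒰)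
    (hunit : ∀ W ∈ 𝒰, W ∈ unitary (H →L[ℂ] H))
    (ψ₁ ψ₂ : H) (hψ₁ : IsCompleteWandering 𝒰 ψ₁) (hψ₂ : IsCompleteWandering 𝒰 ψ₂)
    (lam : ℂ) (hlam : ‖lam‖ ≠ 1) :
    IsRieszBasis (fun U : 𝒰 => (U : H →L[ℂ] H) (ψ₁ + lam • ψ₂)) := by
  classical
  obtain ⟨hon1, hsp1⟩ := hψ₁
  obtain ⟨hon2, hsp2⟩ := hψ₂
  have hrange1 : (Set.range fun U : 𝒰 => (U : H →L[ℂ] H) ψ₁)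
      = (fun U : H →L[ℂ] H => U ψ₁) '' 𝒰 := by
    ext x
    constructor
    · rintro ⟨U, rfl⟩; exact ⟨U, U.2, rfl⟩
    · rintro ⟨U, hU, rfl⟩; exact ⟨⟨U, hU⟩, rfl⟩
  have hrange2 : (Set.range fun U : 𝒰 => (U : H →L[ℂ] H) ψ₂)
      = (fun U : H →L[ℂ] H => U ψ₂) '' 𝒰 := by
    ext x
    constructor
    · rintro ⟨U, rfl⟩; exact ⟨U, U.2, rfl⟩
    · rintro ⟨U, hU, rfl⟩; exact ⟨⟨U, hU⟩, rfl⟩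
  have hsp1' : ⊤ ≤ (Submodule.span ℂ (Set.range fun U : 𝒰 => (U : H →L[ℂ] H) ψ₁)).topologicalClosure := by
    rw [hrange1, hsp1]
  have hsp2' : ⊤ ≤ (Submodule.span ℂ (Set.range fun U : 𝒰 => (U : H →L[ℂ] H) ψ₂)).topologicalClosure := by
    rw [hrange2, hsp2]
  set b1 : HilbertBasis 𝒰 ℂ H := HilbertBasis.mk hon1 hsp1'
  set b2 : HilbertBasis 𝒰 ℂ H := HilbertBasis.mk hon2 hsp2'
  set Ve : H ≃ₗᵢ[ℂ] H := b1.repr.trans b2.repr.symm with hVe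
  have hVb : ∀ U : 𝒰, Ve ((U : H →L[ℂ] H) ψ₁) = (U : H →L[ℂ] H) ψ₂ := by
    intro U
    have h1b : (U : H →L[ℂ] H) ψ₁ = b1 U := (congrFun (HilbertBasis.coe_mk hon1 hsp1') U).symm
    have h2b : (U : H →L[ℂ] H) ψ₂ = b2 U := (congrFun (HilbertBasis.coe_mk hon2 hsp2') U).symm
    rw [h1b, h2b, hVe]
    simp only [LinearIsometryEquiv.trans_apply, HilbertBasis.repr_self]
    have := b2.repr_self U
    rw [← this, LinearIsometryEquiv.symm_apply_apply]
  set V : H →L[ℂ] H := Ve.toContinuousLinearEquiv.toContinuousLinearMap with hV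
  set Vinv : H →L[ℂ] H := Ve.symm.toContinuousLinearEquiv.toContinuousLinearMap with hVinv
  have hVx : ∀ x, V x = Ve x := fun x => rfl
  have hVinvx : ∀ x, Vinv x = Ve.symm x := fun x => rfl
  have hnormV : ‖V‖ ≤ 1 := by
    apply ContinuousLinearMap.opNorm_le_bound _ zero_le_one
    intro x; simp [hVx]
  have hnormVinv : ‖Vinv‖ ≤ 1 := by
    apply ContinuousLinearMap.opNorm_le_bound _ zero_le_one
    intro x; simp [hVinvx]
  -- 1 + lam • V is a unit
  have hu : IsUnit (1 + lam • V) := by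
    rcases lt_or_gt_of_ne hlam with hlt | hgt
    · have hnn : ‖-(lam • V)‖ < 1 := by
        rw [norm_neg]
        calc ‖lam • V‖ ≤ ‖lam‖ * ‖V‖ := norm_smul_le _ _
        _ ≤ ‖lam‖ * 1 := by gcongr
        _ < 1 := by simpa using hlt
      have := (Units.oneSub (-(lam • V)) hnn).isUnit
      simpa [sub_neg_eq_add] using this
    · have hlam0 : lam ≠ 0 := by
        intro h; rw [h] at hgt; simp at hgt
        exact absurd hgt (by norm_num)
      have hninv : ‖-(lam⁻¹ • Vinv)‖ < 1 := by
        rw [norm_neg]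
        calc ‖lam⁻¹ • Vinv‖ ≤ ‖lam⁻¹‖ * ‖Vinv‖ := norm_smul_le _ _
        _ ≤ ‖lam⁻¹‖ * 1 := by gcongr
        _ < 1 := by
            rw [mul_one, norm_inv]
            exact inv_lt_one_of_one_lt₀ hgt
      -- unit for lam • 1
      have hu1 : IsUnit (lam • (1 : H →L[ℂ] H)) := by
        refine ⟨⟨lam • 1, lam⁻¹ • 1, ?_, ?_⟩, rfl⟩
        · rw [smul_mul_smul_comm, mul_one, mul_inv_cancel₀ hlam0, one_smul]
        · rw [smul_mul_smul_comm, mul_one, inv_mul_cancel₀ hlam0, one_smul]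
      have huV : IsUnit V := ⟨ContinuousLinearEquiv.toUnit Ve.toContinuousLinearEquiv, rfl⟩
      have hu3 : IsUnit (1 - (-(lam⁻¹ • Vinv))) := (Units.oneSub _ hninv).isUnit
      have key : (lam • (1 : H →L[ℂ] H)) * V * (1 - (-(lam⁻¹ • Vinv))) = 1 + lam • V := by
        ext x
        simp only [sub_neg_eq_add, ContinuousLinearMap.mul_apply, ContinuousLinearMap.add_apply,
          ContinuousLinearMap.smul_apply, ContinuousLinearMap.one_apply]
        rw [hVx, hVinvx, map_add, map_smul, LinearIsometryEquiv.apply_symm_apply]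
        rw [smul_add, smul_smul, mul_inv_cancel₀ hlam0, one_smul, add_comm, hVx]
      rw [← key]
      exact (hu1.mul huV).mul hu3
  obtain ⟨u, huval⟩ := hu
  set S : H ≃L[ℂ] H := ContinuousLinearEquiv.ofUnit u with hS
  have hSx : ∀ x, S x = x + lam • Ve x := by
    intro x
    show (u : H →L[ℂ] H) x = _
    rw [huval]
    simp [hVx]
  have hSU : ∀ U : 𝒰, S ((U : H →L[ℂ] H) ψ₁) = (U : H →L[ℂ] H) (ψ₁ + lam • ψ₂) := by
    intro U
    rw [hSx, hVb U, map_add, map_smul]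
  have hfun : (fun U : 𝒰 => S.symm ((U : H →L[ℂ] H) (ψ₁ + lam • ψ₂)))
      = fun U : 𝒰 => (U : H →L[ℂ] H) ψ₁ := by
    funext U
    rw [← hSU U, ContinuousLinearEquiv.symm_apply_apply]
  refine ⟨S.symm, ?_, ?_⟩
  · rw [hfun]; exact hon1
  · rw [hfun, hrange1, hsp1]
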